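/- Let w with ι(w) = k and |w|_a ≥ k+1 for all letters a. Then SJSF_{k+1}(w, 1) = (ScatFact_k(w) · C) \ ScatFact_{k+1}(w), where C is the complement in Σ of the alphabet of the rest r(w) of the arch factorisation of w. -/

import Mathlib

open List

variable {α : Type*}

/-- Parikh vector comparison: `u` has at most as many occurrences of each letter as `w`. -/
def ParikhLE [DecidableEq α] (u w : List α) : Prop :=
  ∀ a : α, u.count a ≤ w.count a

/-- `u` is a jumbled scattered factor of `w` with `ℓ` jumbles. -/
def JSF [DecidableEq α] (w : List α) (ℓ : ℕ) (u : List α) : Prop :=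
  ParikhLE u w ∧ ∃ v : List α, v.Sublist u ∧ v.Sublist w ∧ v.length + ℓ = u.length

/-- The jumble index `δ_w(u)`: minimal number of jumbles. -/
noncomputable def jumbleIndex [DecidableEq α] (w u : List α) : ℕ :=
  sInf {ℓ : ℕ | JSF w ℓ u}

/-- Length of a longest common scattered factor (subsequence) of `u` and `w`. -/
noncomputable def lcsf (u w : List α) : ℕ :=
  sSup {n : ℕ | ∃ v : List α, v.Sublist u ∧ v.Sublist w ∧ v.length = n}

/-- Length-`k` jumbled scattered factors of `w` with `ℓ` jumbles. -/
def JScatFactK [DecidableEq α] (k : ℕ) (w : List α) (ℓ : ℕ) : Set (List α) :=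
  {u | u.length = k ∧ JSF w ℓ u}

/-- Jumbled scattered factors of `w` of length at most `k` with `ℓ` jumbles. -/
def JScatFactLe [DecidableEq α] (k : ℕ) (w : List α) (ℓ : ℕ) : Set (List α) :=
  {u | u.length ≤ k ∧ JSF w ℓ u}

/-- Universality index `ι(w)`: largest `k` with `Σ^k ⊆ ScatFact(w)`. -/
noncomputable def univIndex (α : Type*) [Fintype α] (w : List α) : ℕ :=
  sSup {k : ℕ | ∀ u : List α, u.length = k → u.Sublist w}

/-- Minimal number of occurrences of a letter in `w`. -/
noncomputable def minCount (α : Type*) [Fintype α] [DecidableEq α] [Nonempty α]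
    (w : List α) : ℕ :=
  Finset.univ.inf' Finset.univ_nonempty (fun a : α => w.count a)

-- The rest `r(w)` of the arch factorisation of `w`: repeatedly remove the
-- shortest prefix containing all letters of the alphabet; what remains is the rest.
open scoped Classical in
noncomputable def archRest [Fintype α] [DecidableEq α] [Nonempty α] (w : List α) :
    List α :=
  if h : ∃ i, 0 < i ∧ ∀ a : α, a ∈ w.take i then
    have hpos : 0 < Nat.find h := (Nat.find_spec h).1
    have hw : 0 < w.length := by
      obtain ⟨a⟩ := ‹Nonempty α›
      exact List.length_pos_iff.mpr
        (List.ne_nil_of_mem (List.mem_of_mem_take ((Nat.find_spec h).2 a)))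
    archRest (w.drop (Nat.find h))
  else w
termination_by w.length
decreasing_by simp only [List.length_drop]; omega

/-!
Since every word of length `k = ι(w)` embeds in `w`, and `|w|_a ≥ k + 1` makes the Parikh
condition automatic, a word `u` of length `k + 1` has `δ_w(u) = 1` exactly when it does not embed
in `w`; it then suffices to show that `v x` embeds whenever `|v| = k` and `x` occurs in `r(w)`.
Embed the `i`-th letter of `v` in the `i`-th arch and `x` in the rest: this works because the
last letter `c` of the first arch occurs nowhere else in it, so `ι(w) ≥ k` forces every word of
length `k - 1` to embed after the first arch (prefix it with `c`).
-/

theorem Nat.sInf_eq_one_iff {s : Set ℕ} : sInf s = 1 ↔ 1 ∈ s ∧ 0 ∉ s := by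
  constructor
  · intro h
    have hne : s.Nonempty := Set.nonempty_iff_ne_empty.2 fun he => by simp [he] at h
    exact ⟨h ▸ Nat.sInf_mem hne, fun h0 => by simp [Nat.sInf_eq_zero.2 (Or.inl h0)] at h⟩
  · rintro ⟨h1, h0⟩
    have : sInf s ≠ 0 := fun h => (Nat.sInf_eq_zero.1 h).elim h0 fun he => by simp [he] at h1
    have := Nat.sInf_le h1
    omega

theorem List.Sublist.of_cons_append_cons {p s v : List α} {c : α} (hc : c ∉ p)
    (h : (c :: v).Sublist (p ++ c :: s)) : v.Sublist s := by
  obtain ⟨l₁, l₂, hl, h₁, h₂⟩ := sublist_append_iff.1 h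
  cases l₁ with
  | nil => rw [nil_append] at hl; exact cons_sublist_cons.1 (hl ▸ h₂)
  | cons b l₁ =>
    obtain ⟨rfl, -⟩ := cons_eq_cons.1 hl
    exact absurd (h₁.subset mem_cons_self) hc

theorem sublist_of_length_eq_univIndex [Fintype α] {w u : List α}
    (hu : u.length = univIndex α w) : u.Sublist w := by
  cases u with
  | nil => exact nil_sublist w
  | cons a u =>
    have hbdd : BddAbove {k | ∀ u : List α, u.length = k → u.Sublist w} :=
      ⟨w.length, fun k hk => by simpa using (hk (replicate k a) (by simp)).length_le⟩
    have hne : {k | ∀ u : List α, u.length = k → u.Sublist w}.Nonempty :=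
      ⟨0, fun u hu => by simp [length_eq_zero_iff.1 hu]⟩
    exact Nat.sSup_mem hne hbdd _ hu

section Jumbles

variable [DecidableEq α] {w u : List α}

theorem parikhLE_of_length_le (h : ∀ a : α, u.length ≤ w.count a) : ParikhLE u w :=
  fun a => count_le_length.trans (h a)

theorem jsf_zero_iff : JSF w 0 u ↔ u.Sublist w :=
  ⟨fun ⟨_, _, hvu, hvw, hlen⟩ => hvu.eq_of_length hlen ▸ hvw,
    fun h => ⟨fun a => h.count_le a, u, Sublist.refl u, h, rfl⟩⟩

theorem jumbleIndex_eq_one_iff : jumbleIndex w u = 1 ↔ JSF w 1 u ∧ ¬ u.Sublist w :=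
  Nat.sInf_eq_one_iff.trans (and_congr Iff.rfl (not_congr jsf_zero_iff))

end Jumbles

section Arches

variable [Fintype α] [DecidableEq α] [Nonempty α]

theorem archRest_sublist (w : List α) : (archRest w).Sublist w := by
  induction w using archRest.induct with
  | case1 w h _ _ ih => rw [archRest, dif_pos h]; exact ih.trans (drop_sublist _ _)
  | case2 w h => rw [archRest, dif_neg h]

/-- The first arch is `p ++ [c]`, where `c` is the last letter of `Σ` to appear in `w`. -/
theorem exists_first_arch {w : List α} (hw : ∀ a : α, a ∈ w) :
    ∃ p c s, w = p ++ c :: s ∧ c ∉ p ∧ (∀ a : α, a ∈ p ++ [c]) ∧ archRest w = archRest s := by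
  have hlen : 0 < w.length := length_pos_of_mem (hw (Classical.arbitrary α))
  have h : ∃ i, 0 < i ∧ ∀ a : α, a ∈ w.take i := ⟨w.length, hlen, by simpa using hw⟩
  obtain ⟨hpos, hall⟩ := Nat.find_spec h
  have hle : Nat.find h ≤ w.length := Nat.find_min' h ⟨hlen, by simpa using hw⟩
  obtain ⟨m, hm⟩ : ∃ m, Nat.find h = m + 1 := ⟨Nat.find h - 1, by omega⟩
  have hmw : m < w.length := by omega
  rw [hm, take_succ_eq_append_getElem hmw] at hall
  refine ⟨w.take m, w[m], w.drop (m + 1), ?_, fun hc => ?_, hall, ?_⟩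
  · rw [getElem_cons_drop, take_append_drop]
  · refine Nat.find_min h (show m < Nat.find h by omega)
      ⟨(length_pos_of_mem hc).trans_le (length_take_le _ _), fun a => ?_⟩
    rcases mem_append.1 (hall a) with ha | ha
    · exact ha
    · exact mem_singleton.1 ha ▸ hc
  · rw [archRest, dif_pos h]
    simp only [hm]

theorem append_singleton_sublist_of_mem_archRest {w u : List α} {x : α}
    (hall : ∀ v : List α, v.length = u.length → v.Sublist w) (hx : x ∈ archRest w) :
    (u ++ [x]).Sublist w := by
  induction u generalizing w with
  | nil => simpa using (archRest_sublist w).subset hx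
  | cons a u ih =>
    have hw : ∀ b : α, b ∈ w := fun b =>
      (hall (replicate (u.length + 1) b) (by simp)).subset (by simp)
    obtain ⟨p, c, s, rfl, hc, hpc, hrest⟩ := exists_first_arch hw
    have hs : (u ++ [x]).Sublist s :=
      ih (fun v hv => (hall (c :: v) (by simp [hv])).of_cons_append_cons hc) (hrest ▸ hx)
    simpa using (singleton_sublist.2 (hpc a)).append hs

end Arches

theorem stmt18 [Fintype α] [DecidableEq α] [Nonempty α] (w : List α) (k : ℕ)
    (hι : univIndex α w = k) (hcount : ∀ a : α, k + 1 ≤ w.count a) :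
    {u : List α | u.length = k + 1 ∧ ParikhLE u w ∧ jumbleIndex w u = 1} =
      {u : List α | ∃ (v : List α) (x : α),
          u = v ++ [x] ∧ v.length = k ∧ v.Sublist w ∧ x ∉ archRest w} \
        {u : List α | u.length = k + 1 ∧ u.Sublist w} := by
  have hsub : ∀ v : List α, v.length = k → v.Sublist w := fun v hv =>
    sublist_of_length_eq_univIndex (hv.trans hι.symm)
  ext u
  simp only [Set.mem_sdiff, Set.mem_ofPred_eq]
  constructor
  · rintro ⟨hlen, -, hj⟩
    have hnot : ¬ u.Sublist w := (jumbleIndex_eq_one_iff.1 hj).2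
    obtain ⟨v, x, rfl⟩ := (eq_nil_or_concat' u).resolve_left (by rintro rfl; simp at hlen)
    have hv : v.length = k := by simpa using hlen
    refine ⟨⟨v, x, rfl, hv, hsub v hv, fun hx => hnot ?_⟩, fun h => hnot h.2⟩
    exact append_singleton_sublist_of_mem_archRest (fun v' hv' => hsub v' (hv'.trans hv)) hx
  · rintro ⟨⟨v, x, rfl, hv, hvw, -⟩, hnot⟩
    have hlen : (v ++ [x]).length = k + 1 := by simp [hv]
    have hpar : ParikhLE (v ++ [x]) w := parikhLE_of_length_le fun a => hlen ▸ hcount a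
    have hjsf : JSF w 1 (v ++ [x]) := ⟨hpar, v, sublist_append_left v [x], hvw, by simp⟩
    exact ⟨hlen, hpar, jumbleIndex_eq_one_iff.2 ⟨hjsf, fun h => hnot ⟨hlen, h⟩⟩⟩
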